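/- Let j : A → X be a closed cofibration and f : A → Y a continuous map of topological spaces, and let P be the pushout of j and f, with co-projections k : X → P and l : Y → P. Then l : Y → P is a closed cofibration. -/

import Mathlib

/-!
A pushout square in `Type u`-spaces is also a pushout of the underlying sets (test against
indiscrete spaces) and carries the final topology (test against Sierpiński space). Hence,
when `j` is a closed embedding, `l` is injective, `k x = l y` only for `x = j a, y = f a`,
and `l` maps a closed set `C` to a set whose preimages `j (f⁻¹ C)` and `C` are closed.
Homotopy extension follows by currying: homotopies `X × I → T` are maps `X → C(I, T)`,
so an extension over `X` and the given homotopy on `Y` glue along the pushout.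
-/

open unitInterval Topology

universe u

/-- A commutative square of topological spaces
`f : A → Y`, `j : A → X`, `J : Y → Z`, `F : X → Z`
is a pushout square if it commutes and satisfies the universal property of the
pushout in the category of topological spaces. -/
def IsPushoutSquare {A Y X Z : Type u} [TopologicalSpace A] [TopologicalSpace Y]
    [TopologicalSpace X] [TopologicalSpace Z]
    (f : C(A, Y)) (j : C(A, X)) (J : C(Y, Z)) (F : C(X, Z)) : Prop :=
  (∀ a, J (f a) = F (j a)) ∧
  ∀ (T : Type u) [TopologicalSpace T] (u : C(X, T)) (v : C(Y, T)),
    (∀ a, u (j a) = v (f a)) →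
    ∃! w : C(Z, T), (∀ x, w (F x) = u x) ∧ (∀ y, w (J y) = v y)

/-- A continuous map is a closed cofibration if it is a closed embedding and has the
homotopy extension property with respect to every topological space. -/
def IsClosedCofibration {A X : Type u} [TopologicalSpace A] [TopologicalSpace X]
    (j : C(A, X)) : Prop :=
  IsClosedEmbedding j ∧
  ∀ (T : Type u) [TopologicalSpace T] (f : C(X, T)) (G : C(A × I, T)),
    (∀ a, G (a, 0) = f (j a)) →
    ∃ G' : C(X × I, T), (∀ x, G' (x, 0) = f x) ∧ ∀ a t, G' (j a, t) = G (a, t)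

def HasHomotopyExtensionProperty {A X : Type u} [TopologicalSpace A] [TopologicalSpace X]
    (j : C(A, X)) : Prop :=
  ∀ (T : Type u) [TopologicalSpace T] (f : C(X, T)) (G : C(A × I, T)),
    (∀ a, G (a, 0) = f (j a)) →
    ∃ G' : C(X × I, T), (∀ x, G' (x, 0) = f x) ∧ ∀ a t, G' (j a, t) = G (a, t)

namespace IsPushoutSquare

variable {A Y X Z : Type u} [TopologicalSpace A] [TopologicalSpace Y]
  [TopologicalSpace X] [TopologicalSpace Z]
  {f : C(A, Y)} {j : C(A, X)} {J : C(Y, Z)} {F : C(X, Z)}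

theorem exists_desc_fun (hsq : IsPushoutSquare f j J F) {T : Type u} (u : X → T) (v : Y → T)
    (huv : ∀ a, u (j a) = v (f a)) : ∃ w : Z → T, (∀ x, w (F x) = u x) ∧ ∀ y, w (J y) = v y := by
  let _ : TopologicalSpace T := ⊤
  obtain ⟨w, hw, -⟩ := hsq.2 T ⟨u, continuous_top⟩ ⟨v, continuous_top⟩ huv
  exact ⟨w, hw⟩

theorem ext_fun (hsq : IsPushoutSquare f j J F) {T : Type u} {w₁ w₂ : Z → T}
    (hF : ∀ x, w₁ (F x) = w₂ (F x)) (hJ : ∀ y, w₁ (J y) = w₂ (J y)) : w₁ = w₂ := by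
  let _ : TopologicalSpace T := ⊤
  obtain ⟨w, -, hw⟩ := hsq.2 T ⟨w₂ ∘ F, continuous_top⟩ ⟨w₂ ∘ J, continuous_top⟩
    fun a => congrArg w₂ (hsq.1 a).symm
  have h₁ := hw ⟨w₁, continuous_top⟩ ⟨hF, hJ⟩
  have h₂ := hw ⟨w₂, continuous_top⟩ ⟨fun _ => rfl, fun _ => rfl⟩
  exact congrArg DFunLike.coe (h₁.trans h₂.symm)

theorem isOpen_iff (hsq : IsPushoutSquare f j J F) {S : Set Z} :
    IsOpen S ↔ IsOpen (F ⁻¹' S) ∧ IsOpen (J ⁻¹' S) := by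
  refine ⟨fun hS => ⟨hS.preimage F.continuous, hS.preimage J.continuous⟩, fun ⟨hF, hJ⟩ => ?_⟩
  let χ : Z → ULift.{u} Prop := fun z => ULift.up (z ∈ S)
  obtain ⟨w, ⟨hwF, hwJ⟩, -⟩ := hsq.2 (ULift.{u} Prop)
    ⟨χ ∘ F, continuous_uliftUp.comp (continuous_Prop.2 hF)⟩
    ⟨χ ∘ J, continuous_uliftUp.comp (continuous_Prop.2 hJ)⟩
    fun a => congrArg χ (hsq.1 a).symm
  have hw : ⇑w = χ := hsq.ext_fun hwF hwJ
  have hχ : Continuous χ := hw ▸ w.continuous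
  exact continuous_Prop.1 (continuous_uliftDown.comp hχ)

theorem isClosed_iff (hsq : IsPushoutSquare f j J F) {S : Set Z} :
    IsClosed S ↔ IsClosed (F ⁻¹' S) ∧ IsClosed (J ⁻¹' S) := by
  simp only [← isOpen_compl_iff, ← Set.preimage_compl, hsq.isOpen_iff]

theorem exists_fiberMap (hsq : IsPushoutSquare f j J F) (hj : Function.Injective j) :
    ∃ ψ : Z → Set Y, (∀ x, ψ (F x) = f '' (j ⁻¹' {x})) ∧ ∀ y, ψ (J y) = {y} :=
  hsq.exists_desc_fun _ _ fun a => by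
    rw [← Set.image_singleton, hj.preimage_image, Set.image_singleton]

theorem injective_right (hsq : IsPushoutSquare f j J F) (hj : Function.Injective j) :
    Function.Injective J := by
  obtain ⟨ψ, -, hψ⟩ := hsq.exists_fiberMap hj
  intro y y' h
  simpa [hψ] using congrArg ψ h

theorem left_eq_right_iff (hsq : IsPushoutSquare f j J F) (hj : Function.Injective j)
    {x : X} {y : Y} : F x = J y ↔ ∃ a, j a = x ∧ f a = y := by
  refine ⟨fun h => ?_, fun ⟨a, hx, hy⟩ => hx ▸ hy ▸ (hsq.1 a).symm⟩
  obtain ⟨ψ, hψF, hψJ⟩ := hsq.exists_fiberMap hj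
  have hy : y ∈ ψ (F x) := by rw [h, hψJ]; rfl
  simpa [hψF] using hy

theorem preimage_left_image_right (hsq : IsPushoutSquare f j J F) (hj : Function.Injective j)
    (C : Set Y) : F ⁻¹' (J '' C) = j '' (f ⁻¹' C) := by
  ext x
  simp only [Set.mem_preimage, Set.mem_image, eq_comm (b := F x), hsq.left_eq_right_iff hj]
  constructor
  · rintro ⟨y, hy, a, rfl, rfl⟩
    exact ⟨a, hy, rfl⟩
  · rintro ⟨a, hy, rfl⟩
    exact ⟨f a, hy, a, rfl, rfl⟩

theorem isClosedEmbedding_right (hsq : IsPushoutSquare f j J F) (hj : IsClosedEmbedding j) :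
    IsClosedEmbedding J := by
  have hJ := hsq.injective_right hj.injective
  refine .of_continuous_injective_isClosedMap J.continuous hJ fun C hC => ?_
  rw [hsq.isClosed_iff, hsq.preimage_left_image_right hj.injective, hJ.preimage_image]
  exact ⟨hj.isClosedMap _ (hC.preimage f.continuous), hC⟩

theorem hasHomotopyExtensionProperty_right (hsq : IsPushoutSquare f j J F)
    (hj : HasHomotopyExtensionProperty j) : HasHomotopyExtensionProperty J := by
  intro T _ φ G hG
  obtain ⟨G', hG'0, hG'j⟩ := hj T (φ.comp F) (G.comp (f.prodMap (ContinuousMap.id I)))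
    fun a => by simp [hG, hsq.1 a]
  obtain ⟨w, ⟨hwF, hwJ⟩, -⟩ := hsq.2 C(I, T) G'.curry G.curry fun a => by
    ext t
    simpa using hG'j a t
  refine ⟨w.uncurry, fun z => ?_, fun y t => by simp [hwJ]⟩
  have hw0 : (fun z => w.uncurry (z, 0)) = φ :=
    hsq.ext_fun (fun x => by simp [hwF, hG'0]) (fun y => by simp [hwJ, hG])
  exact congrFun hw0 z

end IsPushoutSquare

/-- Closed cofibrations are stable under cobase change: if `j : A → X` is a closed
cofibration, `f : A → Y` is continuous, and `P` is the pushout of `j` and `f` with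
co-projections `k : X → P` and `l : Y → P`, then `l` is a closed cofibration. -/
theorem isClosedCofibration_pushout
    {A X Y P : Type u} [TopologicalSpace A] [TopologicalSpace X] [TopologicalSpace Y]
    [TopologicalSpace P]
    (j : C(A, X)) (f : C(A, Y)) (k : C(X, P)) (l : C(Y, P))
    (hj : IsClosedCofibration j) (hsq : IsPushoutSquare f j l k) :
    IsClosedCofibration l :=
  ⟨hsq.isClosedEmbedding_right hj.1, hsq.hasHomotopyExtensionProperty_right hj.2⟩
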